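/- Let N ≥ 1, m ≥ 1, τ > 0, B ≥ 0. Let H : [0,∞) → ℝ^{N×m} be differentiable with row vectors h_i(t) satisfying ‖h_i(t)‖ ≤ B for all i and t (Euclidean norm), and suppose H satisfies the attention-based Graph ODE dH/dt = −(I − P(t))H(t), where P_{ij}(t) := exp(⟨h_i(t), h_j(t)⟩/τ) / Σ_{k=1}^N exp(⟨h_i(t), h_k(t)⟩/τ) and t ↦ P(t) is continuous. Then with α := (1/N) exp(−2B²/τ), for each feature dimension k one has diam(H_{·k}(t)) ≤ e^{−2αt} · diam(H_{·k}(0)) for all t ≥ 0, where diam(x) := max_i x_i − min_i x_i; in particular H(t) converges to the rank-one consensus subspace, i.e., ‖H(t) − 𝟏 y(t)ᵀ‖_F → 0 as t → ∞, where y(t) is the first row of H(t). -/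

import Mathlib

/-!
The logits `⟨h_i, h_j⟩ / τ` lie in `[-B²/τ, B²/τ]` by Cauchy–Schwarz, so every attention weight
`P_ij` is at least `α = exp(-2B²/τ) / N`. Fix a column `x` of `H` and indices `a`, `b` where it
attains its maximum and minimum. Because the rows of `P` sum to one,
`d/dt (x_a - x_b) = ∑_l P_al (x_l - x_a) - ∑_l P_bl (x_l - x_b)`, where every summand of the first
sum is `≤ 0` and every summand of the second is `≥ 0`; keeping just `l = b` in the first and
`l = a` in the second bounds it by `-2α (x_a - x_b)`. A Grönwall argument for the maximum of the
finitely many differentiable gaps `x_i - x_j`, which only needs the derivative bound at the gaps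
attaining the maximum, turns this into exponential decay of the diameter; entrywise decay then
gives the Frobenius statement.
-/

open Matrix BigOperators Filter Topology

attribute [local instance] Matrix.normedAddCommGroup Matrix.normedSpace

/-- The diameter of a vector: `diam x = max_i x_i − min_i x_i`. -/
noncomputable def vecDiam {N : ℕ} (x : Fin N → ℝ) : ℝ := (⨆ i, x i) - (⨅ i, x i)

/-- Frobenius norm of a real matrix. -/
noncomputable def frobNorm {N m : ℕ} (A : Matrix (Fin N) (Fin m) ℝ) : ℝ :=
  Real.sqrt (∑ i, ∑ k, (A i k) ^ 2)

open Finset Set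

lemma abs_sum_mul_le_sq {ι : Type*} [Fintype ι] {u v : ι → ℝ} {B : ℝ}
    (hu : √(∑ k, u k ^ 2) ≤ B) (hv : √(∑ k, v k ^ 2) ≤ B) : |∑ k, u k * v k| ≤ B ^ 2 := by
  have hB : 0 ≤ B := (Real.sqrt_nonneg _).trans hu
  have key : ∀ w : ι → ℝ, √(∑ k, w k ^ 2) ≤ B → ∑ k, w k * v k ≤ B ^ 2 := fun w hw =>
    (Real.sum_mul_le_sqrt_mul_sqrt _ _ _).trans (sq B ▸ mul_le_mul hw hv (Real.sqrt_nonneg _) hB)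
  have hneg := key (-u) (by simpa using hu)
  simp only [Pi.neg_apply, neg_mul, sum_neg_distrib] at hneg
  exact abs_le.2 ⟨by linarith, key u hu⟩

section Softmax

variable {ι : Type*} [Fintype ι]

noncomputable def softmax (s : ι → ℝ) (j : ι) : ℝ :=
  Real.exp (s j) / ∑ l, Real.exp (s l)

lemma sum_softmax [Nonempty ι] (s : ι → ℝ) : ∑ j, softmax s j = 1 := by
  simp only [softmax, ← sum_div]
  exact div_self (sum_pos (fun l _ => Real.exp_pos (s l)) univ_nonempty).ne'

lemma exp_neg_two_mul_div_card_le_softmax {s : ι → ℝ} {M : ℝ} (hs : ∀ l, |s l| ≤ M) (j : ι) :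
    Real.exp (-2 * M) / Fintype.card ι ≤ softmax s j := by
  have hden : ∑ l, Real.exp (s l) ≤ Fintype.card ι * Real.exp M := by
    simpa using sum_le_card_nsmul univ _ _ fun l _ => Real.exp_le_exp.2 (abs_le.1 (hs l)).2
  calc Real.exp (-2 * M) / Fintype.card ι = Real.exp (-M) / (Fintype.card ι * Real.exp M) := by
        rw [div_mul_eq_div_div_swap, ← Real.exp_sub]; ring_nf
    _ ≤ softmax s j :=
        div_le_div₀ (Real.exp_pos _).le (Real.exp_le_exp.2 (abs_le.1 (hs j)).1)
          (sum_pos (fun l _ => Real.exp_pos (s l)) ⟨j, mem_univ j⟩) hden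

end Softmax

section Drift

variable {ι : Type*} [Fintype ι] {P : Matrix ι ι ℝ} {x : ι → ℝ}

lemma mulVec_apply_sub_self (hrow : ∀ i, ∑ j, P i j = 1) (i : ι) :
    (P *ᵥ x) i - x i = ∑ j, P i j * (x j - x i) := by
  simp only [mulVec, dotProduct, mul_sub, sum_sub_distrib, ← sum_mul, hrow, one_mul]

lemma mul_sub_le_sub_mulVec_of_forall_le (hP : ∀ i j, 0 ≤ P i j) (hrow : ∀ i, ∑ j, P i j = 1)
    {a : ι} (ha : ∀ j, x j ≤ x a) (b : ι) : P a b * (x a - x b) ≤ x a - (P *ᵥ x) a :=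
  calc P a b * (x a - x b) ≤ ∑ j, P a j * (x a - x j) :=
        single_le_sum (f := fun j => P a j * (x a - x j))
          (fun j _ => mul_nonneg (hP a j) (sub_nonneg.2 (ha j))) (mem_univ b)
    _ = x a - (P *ᵥ x) a := by
        rw [← neg_sub, mulVec_apply_sub_self hrow, ← sum_neg_distrib]
        exact sum_congr rfl fun j _ => by ring

lemma mulVec_sub_self_gap_le (hP : ∀ i j, 0 ≤ P i j) (hrow : ∀ i, ∑ j, P i j = 1) {a b : ι}
    (ha : ∀ j, x j ≤ x a) (hb : ∀ j, x b ≤ x j) {α : ℝ} (hab : α ≤ P a b) (hba : α ≤ P b a) :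
    ((P *ᵥ x) a - x a) - ((P *ᵥ x) b - x b) ≤ -2 * α * (x a - x b) := by
  have hmax := mul_sub_le_sub_mulVec_of_forall_le hP hrow ha b
  have hmin := mul_sub_le_sub_mulVec_of_forall_le hP hrow (x := -x) (fun j => neg_le_neg (hb j)) a
  simp only [Pi.neg_apply, mulVec_neg] at hmin
  have hgap : 0 ≤ x a - x b := sub_nonneg.2 (hb a)
  nlinarith [mul_le_mul_of_nonneg_right hab hgap, mul_le_mul_of_nonneg_right hba hgap]

end Drift

lemma HasDerivAt.eventually_nhdsGT_sub_lt {g : ℝ → ℝ} {g' x c r : ℝ} (hg : HasDerivAt g g' x)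
    (hle : g x ≤ c) (hr : g x = c → g' < r) : ∀ᶠ z in 𝓝[>] x, g z - c < r * (z - x) := by
  rcases hle.eq_or_lt with heq | hlt
  · filter_upwards [hg.hasDerivWithinAt.limsup_slope_le' (lt_irrefl x) (hr heq),
      self_mem_nhdsWithin] with z hz hxz
    rw [slope_def_field, div_lt_iff₀ (sub_pos.2 hxz)] at hz
    rwa [← heq]
  · have hleft : ContinuousAt (fun z => g z - c) x := hg.continuousAt.sub continuousAt_const
    have hright : ContinuousAt (fun z => r * (z - x)) x := by fun_prop
    exact nhdsWithin_le_nhds (hleft.eventually_lt hright (by simpa using hlt))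

theorem sup'_le_exp_mul_sup'_of_deriv_le_at_max {ι : Type*} [Fintype ι] [Nonempty ι]
    {d d' : ι → ℝ → ℝ} {K : ℝ} (hd : ∀ q, ∀ t ≥ 0, HasDerivAt (d q) (d' q t) t)
    (hK : ∀ t ≥ 0, ∀ q, (∀ p, d p t ≤ d q t) → d' q t ≤ K * d q t) {t : ℝ} (ht : 0 ≤ t) :
    univ.sup' univ_nonempty (d · t) ≤ Real.exp (K * t) * univ.sup' univ_nonempty (d · 0) := by
  set f := fun s => univ.sup' univ_nonempty (d · s)
  have hcont : ContinuousOn f (Icc 0 t) := ContinuousOn.finset_sup'_apply _ fun q _ s hs =>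
    (hd q s hs.1).continuousAt.continuousWithinAt
  have hslope : ∀ s ∈ Ico 0 t, ∀ r, K * f s < r →
      ∃ᶠ z in 𝓝[>] s, (z - s)⁻¹ * (f z - f s) < r := by
    intro s hs r hr
    have hall : ∀ᶠ z in 𝓝[>] s, ∀ q, d q z - f s < r * (z - s) := eventually_all.2 fun q =>
      (hd q s hs.1).eventually_nhdsGT_sub_lt (le_sup' (d · s) (mem_univ q)) fun hq =>
        (hK s hs.1 q fun p => hq ▸ le_sup' (d · s) (mem_univ p)).trans_lt (hq ▸ hr)
    refine ((hall.and self_mem_nhdsWithin).mono fun z ⟨hz, hsz⟩ => ?_).frequently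
    have : f z < f s + r * (z - s) := (sup'_lt_iff _).2 fun q _ => by linarith [hz q]
    rw [inv_mul_lt_iff₀ (sub_pos.2 hsz)]
    linarith
  have := le_gronwallBound_of_liminf_deriv_right_le hcont hslope le_rfl
    (fun s _ => (add_zero _).ge) t ⟨ht, le_rfl⟩
  rwa [sub_zero, gronwallBound_ε0, mul_comm] at this

section Diameter

variable {N : ℕ}

lemma sub_le_vecDiam (x : Fin N → ℝ) (i j : Fin N) : x i - x j ≤ vecDiam x :=
  sub_le_sub (le_ciSup (Finite.bddAbove_range x) i) (ciInf_le (Finite.bddBelow_range x) j)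

lemma abs_sub_le_vecDiam (x : Fin N → ℝ) (i j : Fin N) : |x i - x j| ≤ vecDiam x :=
  abs_sub_le_iff.2 ⟨sub_le_vecDiam x i j, sub_le_vecDiam x j i⟩

variable [NeZero N]

lemma vecDiam_nonneg (x : Fin N → ℝ) : 0 ≤ vecDiam x :=
  (sub_self (x 0)).ge.trans (sub_le_vecDiam x 0 0)

lemma vecDiam_eq_sup' (x : Fin N → ℝ) :
    vecDiam x = univ.sup' univ_nonempty fun p : Fin N × Fin N => x p.1 - x p.2 := by
  obtain ⟨a, ha⟩ := Finite.exists_max x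
  obtain ⟨b, hb⟩ := Finite.exists_min x
  have hsup : ⨆ i, x i = x a := le_antisymm (ciSup_le ha) (le_ciSup (Finite.bddAbove_range x) a)
  have hinf : ⨅ i, x i = x b := le_antisymm (ciInf_le (Finite.bddBelow_range x) b) (le_ciInf hb)
  rw [vecDiam, hsup, hinf]
  exact le_antisymm (le_sup' (fun p : Fin N × Fin N => x p.1 - x p.2) (mem_univ (a, b)))
    (sup'_le _ _ fun p _ => sub_le_sub (ha p.1) (hb p.2))

theorem vecDiam_le_exp_mul_of_hasDerivAt {x : ℝ → Fin N → ℝ} {P : ℝ → Matrix (Fin N) (Fin N) ℝ}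
    {α : ℝ} (hα : 0 ≤ α) (hP : ∀ t ≥ 0, ∀ i j, α ≤ P t i j)
    (hrow : ∀ t ≥ 0, ∀ i, ∑ j, P t i j = 1) (hx : ∀ t ≥ 0, HasDerivAt x (P t *ᵥ x t - x t) t)
    {t : ℝ} (ht : 0 ≤ t) : vecDiam (x t) ≤ Real.exp (-2 * α * t) * vecDiam (x 0) := by
  have hcoord : ∀ i, ∀ s ≥ 0, HasDerivAt (fun s => x s i) ((P s *ᵥ x s) i - x s i) s :=
    fun i s hs => hasDerivAt_pi.1 (hx s hs) i
  rw [vecDiam_eq_sup', vecDiam_eq_sup']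
  refine sup'_le_exp_mul_sup'_of_deriv_le_at_max
    (d := fun (p : Fin N × Fin N) s => x s p.1 - x s p.2)
    (fun p s hs => (hcoord p.1 s hs).sub (hcoord p.2 s hs)) ?_ ht
  rintro s hs ⟨a, b⟩ hmax
  exact mulVec_sub_self_gap_le (fun i j => hα.trans (hP s hs i j)) (hrow s hs)
    (fun j => by linarith [hmax (j, b)]) (fun j => by linarith [hmax (a, j)])
    (hP s hs a b) (hP s hs b a)

end Diameter

lemma tendsto_frobNorm_sub_row {N m : ℕ} {α : Type*} {l : Filter α}
    {A : α → Matrix (Fin N) (Fin m) ℝ} (i₀ : Fin N)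
    (h : ∀ k, Tendsto (fun t => vecDiam fun i => A t i k) l (𝓝 0)) :
    Tendsto (fun t => frobNorm (A t - of fun _ k => A t i₀ k)) l (𝓝 0) := by
  have hentry : ∀ i k, Tendsto (fun t => A t i k - A t i₀ k) l (𝓝 0) := fun i k =>
    squeeze_zero_norm (fun t => abs_sub_le_vecDiam (fun i => A t i k) i i₀) (h k)
  simpa [frobNorm] using
    (tendsto_finsetSum univ fun i _ => tendsto_finsetSum univ fun k _ => (hentry i k).pow 2).sqrt

theorem dense_soft_attention_consensus_trap_general
    (N m : ℕ) (hN : 1 ≤ N) (τ B : ℝ) (hτ : 0 < τ)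
    (H : ℝ → Matrix (Fin N) (Fin m) ℝ)
    (hbound : ∀ t ≥ (0:ℝ), ∀ i, Real.sqrt (∑ k, (H t i k) ^ 2) ≤ B)
    (P : ℝ → Matrix (Fin N) (Fin N) ℝ)
    (hP : ∀ t ≥ (0:ℝ), ∀ i j, P t i j =
      Real.exp ((∑ k, H t i k * H t j k) / τ) /
        ∑ l, Real.exp ((∑ k, H t i k * H t l k) / τ))
    (hode : ∀ t ≥ (0:ℝ), HasDerivAt H ((P t) * (H t) - H t) t) :
    (∀ k : Fin m, ∀ t ≥ (0:ℝ),
        vecDiam (fun i => H t i k) ≤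
          Real.exp (-2 * ((1 / (N : ℝ)) * Real.exp (-2 * B ^ 2 / τ)) * t) *
            vecDiam (fun i => H 0 i k)) ∧
      Tendsto
        (fun t : ℝ => frobNorm (H t - Matrix.of fun (_ : Fin N) (k : Fin m) => H t ⟨0, hN⟩ k))
        atTop (𝓝 0) := by
  have : NeZero N := ⟨by omega⟩
  set α := (1 / (N : ℝ)) * Real.exp (-2 * B ^ 2 / τ) with hα
  have hPα : ∀ t ≥ (0:ℝ), ∀ i j, α ≤ P t i j := by
    intro t ht i j
    have hlogit : ∀ l, |(∑ k, H t i k * H t l k) / τ| ≤ B ^ 2 / τ := fun l => by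
      rw [abs_div, abs_of_pos hτ]
      exact div_le_div_of_nonneg_right (abs_sum_mul_le_sq (hbound t ht i) (hbound t ht l)) hτ.le
    convert exp_neg_two_mul_div_card_le_softmax hlogit j using 1
    · rw [hα, Fintype.card_fin]; ring_nf
    · exact hP t ht i j
  have hrow : ∀ t ≥ (0:ℝ), ∀ i, ∑ j, P t i j = 1 := fun t ht i => by
    simp_rw [hP t ht i]; exact sum_softmax _
  have hcol : ∀ k, ∀ t ≥ (0:ℝ), HasDerivAt (fun s i => H s i k)
      (P t *ᵥ (fun i => H t i k) - fun i => H t i k) t := fun k t ht =>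
    hasDerivAt_pi.2 fun i => by
      simpa [Matrix.mul_apply, mulVec, dotProduct] using
        hasDerivAt_pi.1 (hasDerivAt_pi.1 (hode t ht) i) k
  have hα₀ : 0 < α := by positivity
  have hdecay : ∀ k : Fin m, ∀ t ≥ (0:ℝ), vecDiam (fun i => H t i k) ≤
      Real.exp (-2 * α * t) * vecDiam (fun i => H 0 i k) := fun k t ht =>
    vecDiam_le_exp_mul_of_hasDerivAt hα₀.le hPα hrow (hcol k) ht
  refine ⟨hdecay, tendsto_frobNorm_sub_row _ fun k => ?_⟩
  have hexp : Tendsto (fun t => Real.exp (-2 * α * t) * vecDiam (fun i => H 0 i k)) atTop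
      (𝓝 0) := by
    simpa using (Real.tendsto_exp_atBot.comp
      (tendsto_id.const_mul_atTop_of_neg (r := -2 * α) (by linarith))).mul_const _
  exact squeeze_zero' (Eventually.of_forall fun t => vecDiam_nonneg _)
    ((eventually_ge_atTop 0).mono fun t ht => hdecay k t ht) hexp

/-- **Dense soft attention induces the consensus trap.**
If the rows `h_i(t)` of `H(t)` satisfy `‖h_i(t)‖ ≤ B` and `H` solves the
attention-based Graph ODE `dH/dt = −(I − P(t))H` with
`P_{ij}(t) = exp(⟨h_i,h_j⟩/τ)/∑_k exp(⟨h_i,h_k⟩/τ)`, then with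
`α = (1/N) exp(−2B²/τ)` every column diameter decays as `e^{−2αt}` and
`‖H(t) − 𝟏 y(t)ᵀ‖_F → 0`, where `y(t)` is the first row of `H(t)`. -/
theorem dense_soft_attention_consensus_trap
    (N m : ℕ) (hN : 1 ≤ N) (hm : 1 ≤ m) (τ B : ℝ) (hτ : 0 < τ) (hB : 0 ≤ B)
    (H : ℝ → Matrix (Fin N) (Fin m) ℝ)
    (hbound : ∀ t ≥ (0:ℝ), ∀ i, Real.sqrt (∑ k, (H t i k) ^ 2) ≤ B)
    (P : ℝ → Matrix (Fin N) (Fin N) ℝ)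
    (hP : ∀ t ≥ (0:ℝ), ∀ i j, P t i j =
      Real.exp ((∑ k, H t i k * H t j k) / τ) /
        ∑ l, Real.exp ((∑ k, H t i k * H t l k) / τ))
    (hPcont : Continuous P)
    (hode : ∀ t ≥ (0:ℝ), HasDerivAt H ((P t) * (H t) - H t) t) :
    (∀ k : Fin m, ∀ t ≥ (0:ℝ),
        vecDiam (fun i => H t i k) ≤
          Real.exp (-2 * ((1 / (N : ℝ)) * Real.exp (-2 * B ^ 2 / τ)) * t) *
            vecDiam (fun i => H 0 i k)) ∧
      Tendsto
        (fun t : ℝ => frobNorm (H t - Matrix.of fun (_ : Fin N) (k : Fin m) => H t ⟨0, hN⟩ k))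
        atTop (𝓝 0) :=
  dense_soft_attention_consensus_trap_general N m hN τ B hτ H hbound P hP hode
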